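/- Let C₀ denote the operator system of all 2×2 complex matrices whose two diagonal entries are equal, with positivity inherited from M₂(ℂ). Then C₀ is not order isomorphic to any unital C*-algebra: for every unital complex C*-algebra B there is no complex-linear bijection φ : C₀ → B with φ(I) = 1_B such that φ maps positive elements of C₀ to positive elements of B and φ⁻¹ maps positive elements of B to positive elements of C₀. -/

import Mathlib

open scoped ComplexOrder

/-- The operator system `C₀` of all `2×2` complex matrices whose two diagonal entries
are equal, as a (complex) linear subspace of `M₂(ℂ)`. -/
noncomputable def C0 : Submodule ℂ (Matrix (Fin 2) (Fin 2) ℂ) where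
  carrier := {x | x 0 0 = x 1 1}
  zero_mem' := rfl
  add_mem' := by
    intro a b ha hb
    simp only [Set.mem_setOf_eq] at *
    simp [Matrix.add_apply, ha, hb]
  smul_mem' := by
    intro c a ha
    simp only [Set.mem_setOf_eq] at *
    simp [Matrix.smul_apply, ha]

theorem one_mem_C0 : (1 : Matrix (Fin 2) (Fin 2) ℂ) ∈ C0 := by
  show (1 : Matrix (Fin 2) (Fin 2) ℂ) 0 0 = (1 : Matrix (Fin 2) (Fin 2) ℂ) 1 1
  simp [Matrix.one_apply]

/-!
An order isomorphism `φ : C₀ → B` preserves extreme rays of the positive cones. In `C₀` the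
projections `P_z` onto the lines `ℂ (z, 1)`, `|z| = 1`, span extreme rays, and so do
`1 - P_z = P_{-z}`. In a C⋆-algebra, an element `0 ≤ p ≤ 1` such that `p` and `1 - p` span
extreme rays and `1, p` are independent is a projection: `p²` lies in `[0, p]` and `(1 - p)²` in
`[0, 1 - p]`, and comparing the two scalars forces `p² = p`. Hence `p = φ P_1` and `r = φ P_i`
are projections which, with `1`, form a basis of the three-dimensional `B`. Writing `p r` in this
basis shows that `p r` is self-adjoint, so `p` and `r` commute. Then `p r` lies in `[0, p]` and
in `[0, r]`, hence is a multiple of both and vanishes; so `0 ≤ p ≤ 1 - r` makes `p` a multiple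
of `1 - r`, contradicting the independence of `1, p, r`.
-/

open scoped MatrixOrder ComplexConjugate
open Matrix

section IsExtremeRay

variable (R : Type*) {M N : Type*} [Semiring R] [AddCommMonoid M] [PartialOrder M] [Module R M]
  [AddCommMonoid N] [PartialOrder N] [Module R N]

def IsExtremeRay (a : M) : Prop := ∀ b, 0 ≤ b → b ≤ a → ∃ t : R, b = t • a

variable {R}

lemma IsExtremeRay.of_map {a : M} (f : M →ₗ[R] N) (hf : ∀ x y, f x ≤ f y ↔ x ≤ y)
    (h : IsExtremeRay R (f a)) : IsExtremeRay R a := by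
  intro b hb hba
  obtain ⟨t, ht⟩ := h (f b) (by simpa using (hf 0 b).2 hb) ((hf b a).2 hba)
  refine ⟨t, le_antisymm ?_ ?_⟩ <;> rw [← hf, map_smul, ← ht]

end IsExtremeRay

section Triple

variable {K V : Type*} [Ring K] [AddCommGroup V] [Module K V] {x y z : V}

lemma LinearIndependent.eq_zero_of_triple (h : LinearIndependent K ![x, y, z]) {a b c : K}
    (habc : a • x + b • y + c • z = 0) : a = 0 ∧ b = 0 ∧ c = 0 := by
  have := Fintype.linearIndependent_iff.1 h ![a, b, c] (by simpa [Fin.sum_univ_three] using habc)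
  exact ⟨this 0, this 1, this 2⟩

lemma LinearIndependent.pair_of_triple (h : LinearIndependent K ![x, y, z]) :
    LinearIndependent K ![x, y] ∧ LinearIndependent K ![x, z] := by
  refine ⟨pair_iff.2 fun s t hst => ?_, pair_iff.2 fun s t hst => ?_⟩
  · obtain ⟨h₁, h₂, -⟩ := h.eq_zero_of_triple (a := s) (b := t) (c := 0)
      (by rwa [zero_smul, add_zero])
    exact ⟨h₁, h₂⟩
  · obtain ⟨h₁, -, h₃⟩ := h.eq_zero_of_triple (a := s) (b := 0) (c := t)
      (by rwa [zero_smul, add_zero])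
    exact ⟨h₁, h₃⟩

end Triple

lemma IsExtremeRay.isStarProjection {A : Type*} [CStarAlgebra A] [PartialOrder A]
    [StarOrderedRing A] {p : A} (hp₀ : 0 ≤ p) (hp₁ : p ≤ 1) (hp : IsExtremeRay ℂ p)
    (hq : IsExtremeRay ℂ (1 - p)) (hli : LinearIndependent ℂ ![1, p]) : IsStarProjection p := by
  have sq_mem {a : A} (ha₀ : 0 ≤ a) (ha₁ : a ≤ 1) : 0 ≤ a * a ∧ a * a ≤ a := by
    have h := CStarAlgebra.pow_antitone ha₀ ha₁ one_le_two
    simp only [pow_two, pow_one] at h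
    exact ⟨pow_two a ▸ CStarAlgebra.pow_nonneg ha₀ 2, h⟩
  have hq₀ : 0 ≤ 1 - p := sub_nonneg.2 hp₁
  have hq₁ : 1 - p ≤ 1 := sub_le_self 1 hp₀
  obtain ⟨s, hs⟩ := hp _ (sq_mem hp₀ hp₁).1 (sq_mem hp₀ hp₁).2
  obtain ⟨t, ht⟩ := hq _ (sq_mem hq₀ hq₁).1 (sq_mem hq₀ hq₁).2
  have hcomb : (1 - t) • (1 : A) + (s - 2 + t) • p = 0 := by
    rw [show (1 - p) * (1 - p) = 1 - 2 • p + p * p by noncomm_ring, hs] at ht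
    linear_combination (norm := module) ht
  obtain ⟨h₁, h₂⟩ := hli.eq_zero_of_pair hcomb
  refine ⟨?_, IsSelfAdjoint.of_nonneg hp₀⟩
  rw [IsIdempotentElem, hs, show s = 1 by linear_combination h₂ + h₁, one_smul]

namespace IsStarProjection

variable {A : Type*} [Ring A] [StarRing A] {p r : A}

lemma commute_of_mul_mem_span [Algebra ℂ A] (hp : IsStarProjection p) (hr : IsStarProjection r)
    (h : p * r ∈ Submodule.span ℂ (Set.range ![1, p, r])) : Commute p r := by
  rw [IsSelfAdjoint.commute_iff hp.isSelfAdjoint hr.isSelfAdjoint]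
  obtain ⟨c, hc⟩ := (Submodule.mem_span_range_iff_exists_fun ℂ).1 h
  simp only [Fin.sum_univ_three, cons_val_zero, cons_val_one, cons_val_two, head_cons,
    tail_cons] at hc
  -- `1 - p` kills `p * r` on the left and `1 - r` kills it on the right; applied to the
  -- expansion `hc`, this leaves `p * r ∈ {0, p, r, p + r - 1}`.
  have hleft : c 0 • (1 - p) + c 2 • ((1 - p) * r) = 0 := by
    have : (1 - p) * (p * r) = 0 := by rw [← mul_assoc, hp.one_sub_mul_self, zero_mul]
    simpa only [← hc, mul_add, mul_smul_comm, mul_one, hp.one_sub_mul_self, smul_zero,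
      add_zero] using this
  have hright : c 0 • (1 - r) + c 1 • (p * (1 - r)) = 0 := by
    have : p * r * (1 - r) = 0 := by rw [mul_assoc, hr.mul_one_sub_self, mul_zero]
    simpa only [← hc, add_mul, smul_mul_assoc, one_mul, mul_assoc, hr.mul_one_sub_self,
      smul_zero, add_zero] using this
  by_cases h0 : c 0 = 0
  · rw [h0, zero_smul, zero_add] at hleft hright
    rcases smul_eq_zero.1 hleft with h2 | h2
    · rcases smul_eq_zero.1 hright with h1 | h1
      · rw [← hc, h0, h1, h2]
        simp
      · rw [show p * r = p by rw [← sub_eq_zero, ← neg_eq_zero, ← h1]; noncomm_ring]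
        exact hp.isSelfAdjoint
    · rw [show p * r = r by rw [← sub_eq_zero, ← neg_eq_zero, ← h2]; noncomm_ring]
      exact hr.isSelfAdjoint
  · have h01 : (1 - p) * (1 - r) = 0 := by
      have := congrArg (· * (1 - r)) hleft
      simp only [add_mul, smul_mul_assoc, mul_assoc, hr.mul_one_sub_self, mul_zero, smul_zero,
        add_zero, zero_mul] at this
      exact (smul_eq_zero.1 this).resolve_left h0
    rw [show p * r = p + r - 1 by rw [← sub_eq_zero, ← h01]; noncomm_ring]
    exact (hp.isSelfAdjoint.add hr.isSelfAdjoint).sub (.one A)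

lemma not_linearIndependent_of_commute [PartialOrder A] [StarOrderedRing A] [Module ℂ A]
    (hp : IsStarProjection p) (hr : IsStarProjection r) (hpr : Commute p r)
    (hpe : IsExtremeRay ℂ p) (hre : IsExtremeRay ℂ r) (hre' : IsExtremeRay ℂ (1 - r)) :
    ¬ LinearIndependent ℂ ![1, p, r] := by
  intro hli
  have hpr' : Commute p (1 - r) := (Commute.one_right p).sub_right hpr
  have hpr₀ : 0 ≤ p * r := (hp.mul hr hpr).nonneg
  obtain ⟨κ, hκ⟩ := hpe _ hpr₀ <| sub_nonneg.1 <| by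
    rw [← mul_one_sub]
    exact (hp.mul hr.one_sub hpr').nonneg
  obtain ⟨τ, hτ⟩ := hre _ hpr₀ <| sub_nonneg.1 <| by
    rw [← one_sub_mul]
    exact (hp.one_sub.mul hr ((Commute.one_left r).sub_left hpr)).nonneg
  have hκ0 : κ = 0 := (hli.eq_zero_of_triple (a := 0) (b := κ) (c := -τ) (by
    rw [zero_smul, zero_add, neg_smul, ← hκ, ← hτ, add_neg_cancel])).2.1
  rw [hκ0, zero_smul] at hκ
  obtain ⟨t, ht⟩ := hre' p hp.nonneg <| sub_nonneg.1 <| by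
    rw [show 1 - r - p = (1 - p) * (1 - r) by noncomm_ring; rw [hκ]; abel]
    exact (hp.one_sub.mul hr.one_sub ((Commute.one_left _).sub_left hpr')).nonneg
  have := (hli.eq_zero_of_triple (a := t) (b := -1) (c := -t) (by rw [ht]; module)).2.1
  norm_num at this

end IsStarProjection

lemma Matrix.mulVec_eq_zero_of_nonneg_of_le {𝕜 n : Type*} [RCLike 𝕜] [Fintype n]
    {A B : Matrix n n 𝕜} {v : n → 𝕜} (hB : 0 ≤ B) (hBA : B ≤ A) (hv : A *ᵥ v = 0) :
    B *ᵥ v = 0 := by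
  have h₁ : 0 ≤ star v ⬝ᵥ B *ᵥ v := (nonneg_iff_posSemidef.1 hB).dotProduct_mulVec_nonneg v
  have h₂ : 0 ≤ star v ⬝ᵥ (A - B) *ᵥ v :=
    (nonneg_iff_posSemidef.1 (sub_nonneg.2 hBA)).dotProduct_mulVec_nonneg v
  rw [sub_mulVec, hv, zero_sub, dotProduct_neg, neg_nonneg] at h₂
  exact ((nonneg_iff_posSemidef.1 hB).dotProduct_mulVec_zero_iff v).1 (le_antisymm h₂ h₁)

/-- For `‖z‖ = 1`, the orthogonal projection of `ℂ²` onto the line through `![z, 1]`. -/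
noncomputable def lineProj (z : ℂ) : Matrix (Fin 2) (Fin 2) ℂ :=
  !![1 / 2, z / 2; conj z / 2, 1 / 2]

lemma lineProj_mem_C0 (z : ℂ) : lineProj z ∈ C0 := rfl

lemma one_sub_lineProj (z : ℂ) : 1 - lineProj z = lineProj (-z) := by
  rw [one_fin_two]
  ext i j
  fin_cases i <;> fin_cases j <;>
    simp only [lineProj, Matrix.sub_apply, of_apply, Fin.zero_eta, Fin.mk_one, cons_val',
      cons_val_zero, cons_val_one, cons_val_fin_one, map_neg] <;> ring

lemma isStarProjection_lineProj {z : ℂ} (hz : ‖z‖ = 1) : IsStarProjection (lineProj z) := by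
  have hz' : conj z * z = 1 := by rw [Complex.conj_mul', hz]; norm_num
  refine ⟨?_, ?_⟩
  · rw [IsIdempotentElem, lineProj, mul_fin_two]
    ext i j
    fin_cases i <;> fin_cases j <;>
      simp only [of_apply, Fin.zero_eta, Fin.mk_one, cons_val', cons_val_zero, cons_val_one,
        cons_val_fin_one] <;> first | ring1 | linear_combination (1 / 4) * hz'
  · ext i j; fin_cases i <;> fin_cases j <;> simp [lineProj]

lemma isExtremeRay_lineProj {z : ℂ} (hz : ‖z‖ = 1) : IsExtremeRay ℂ (lineProj z) := by
  have hz' : conj z * z = 1 := by rw [Complex.conj_mul', hz]; norm_num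
  intro b hb hbz
  have hker : b *ᵥ ![-z, 1] = 0 := by
    refine mulVec_eq_zero_of_nonneg_of_le hb hbz ?_
    ext i
    fin_cases i <;>
      simp only [lineProj, mulVec, dotProduct, Fin.sum_univ_two, of_apply, Fin.zero_eta,
        Fin.mk_one, cons_val', cons_val_zero, cons_val_one, cons_val_fin_one, Pi.zero_apply] <;>
      first | ring1 | linear_combination (-1 / 2) * hz'
  have h₀₁ : b 0 1 = b 0 0 * z := by
    linear_combination (by simpa [mulVec, dotProduct] using congrFun hker 0 :
      -(b 0 0 * z) + b 0 1 = 0)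
  have h₁₁ : b 1 1 = b 1 0 * z := by
    linear_combination (by simpa [mulVec, dotProduct] using congrFun hker 1 :
      -(b 1 0 * z) + b 1 1 = 0)
  have hb_herm := (nonneg_iff_posSemidef.1 hb).isHermitian
  have h₁₀ : b 1 0 = b 0 0 * conj z := by
    rw [← star_star (b 1 0), hb_herm.apply 0 1, h₀₁, star_mul', hb_herm.apply 0 0]
    rfl
  have h₁₁' : b 1 1 = b 0 0 := by rw [h₁₁, h₁₀, mul_assoc, hz', mul_one]
  refine ⟨2 * b 0 0, ?_⟩
  rw [eta_fin_two b, h₀₁, h₁₀, h₁₁', lineProj]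
  ext i j
  fin_cases i <;> fin_cases j <;>
    simp only [Matrix.smul_apply, smul_eq_mul, of_apply, Fin.zero_eta, Fin.mk_one, cons_val',
      cons_val_zero, cons_val_one, cons_val_fin_one] <;> ring

lemma linearIndependent_lineProj :
    LinearIndependent ℂ ![1, lineProj 1, lineProj Complex.I] := by
  refine Fintype.linearIndependent_iff.2 fun g hg => ?_
  simp only [Fin.sum_univ_three] at hg
  have e₀₀ : g 0 + g 1 * 2⁻¹ + g 2 * 2⁻¹ = 0 := by
    simpa [lineProj] using congrFun (congrFun hg 0) 0
  have e₀₁ : g 1 * 2⁻¹ + g 2 * (Complex.I / 2) = 0 := by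
    simpa [lineProj] using congrFun (congrFun hg 0) 1
  have e₁₀ : g 1 * 2⁻¹ + g 2 * (-Complex.I / 2) = 0 := by
    simpa [lineProj] using congrFun (congrFun hg 1) 0
  have h₂ : g 2 = 0 := by
    simpa using (by linear_combination e₀₁ - e₁₀ : g 2 * Complex.I = 0)
  have h₁ : g 1 = 0 := by linear_combination e₀₁ + e₁₀
  have h₀ : g 0 = 0 := by linear_combination e₀₀ - h₁ / 2 - h₂ / 2
  intro i; fin_cases i <;> assumption

lemma mem_C0 {x : Matrix (Fin 2) (Fin 2) ℂ} : x ∈ C0 ↔ x 0 0 = x 1 1 := Iff.rfl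

lemma C0_ne_top : C0 ≠ ⊤ := fun h => by
  have : single (0 : Fin 2) 0 (1 : ℂ) ∈ C0 := h ▸ Submodule.mem_top
  simp [mem_C0] at this

noncomputable def lineProjC0 (z : ℂ) : C0 := ⟨lineProj z, lineProj_mem_C0 z⟩

lemma linearIndependent_lineProjC0 :
    LinearIndependent ℂ ![⟨1, one_mem_C0⟩, lineProjC0 1, lineProjC0 Complex.I] :=
  .of_comp C0.subtype <| by
    convert linearIndependent_lineProj using 1
    ext i; fin_cases i <;> rfl

lemma finrank_C0 : Module.finrank ℂ C0 = 3 := by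
  refine le_antisymm ?_ (by simpa using linearIndependent_lineProjC0.fintype_card_le_finrank)
  have := Submodule.finrank_lt C0_ne_top
  simp only [Module.finrank_matrix, Fintype.card_fin, Module.finrank_self] at this
  omega

section

variable {B : Type*} [Ring B] [Module ℂ B] (φ : C0 ≃ₗ[ℂ] B)

lemma linearIndependent_map_lineProjC0 (hφ1 : φ ⟨1, one_mem_C0⟩ = 1) :
    LinearIndependent ℂ ![1, φ (lineProjC0 1), φ (lineProjC0 Complex.I)] := by
  rw [show ![1, φ (lineProjC0 1), φ (lineProjC0 Complex.I)] =
      φ ∘ ![⟨1, one_mem_C0⟩, lineProjC0 1, lineProjC0 Complex.I] by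
    ext i; fin_cases i <;> simp [hφ1]]
  exact linearIndependent_lineProjC0.map' φ.toLinearMap φ.ker

lemma span_map_lineProjC0 (hφ1 : φ ⟨1, one_mem_C0⟩ = 1) :
    Submodule.span ℂ (Set.range ![1, φ (lineProjC0 1), φ (lineProjC0 Complex.I)]) = ⊤ :=
  haveI := φ.finiteDimensional
  (linearIndependent_map_lineProjC0 φ hφ1).span_eq_top_of_card_eq_finrank'
    (by rw [← φ.finrank_eq, finrank_C0]; rfl)

lemma one_sub_map_lineProjC0 (hφ1 : φ ⟨1, one_mem_C0⟩ = 1) (z : ℂ) :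
    1 - φ (lineProjC0 z) = φ (lineProjC0 (-z)) := by
  rw [← hφ1, ← map_sub]
  exact congrArg φ (Subtype.ext (one_sub_lineProj z))

variable [PartialOrder B]

lemma isExtremeRay_map_lineProjC0 (hφ : ∀ x y, φ x ≤ φ y ↔ x ≤ y) {z : ℂ} (hz : ‖z‖ = 1) :
    IsExtremeRay ℂ (φ (lineProjC0 z)) := by
  have hC0 : IsExtremeRay ℂ (lineProjC0 z) :=
    (isExtremeRay_lineProj hz).of_map C0.subtype fun _ _ => Iff.rfl
  refine .of_map φ.symm.toLinearMap (fun x y => ?_) (by simpa using hC0)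
  simpa using (hφ (φ.symm x) (φ.symm y)).symm

end

lemma isStarProjection_map_lineProjC0 {B : Type*} [CStarAlgebra B] [PartialOrder B]
    [StarOrderedRing B] (φ : C0 ≃ₗ[ℂ] B) (hφ1 : φ ⟨1, one_mem_C0⟩ = 1)
    (hφ : ∀ x y, φ x ≤ φ y ↔ x ≤ y) {z : ℂ} (hz : ‖z‖ = 1)
    (hli : LinearIndependent ℂ ![1, φ (lineProjC0 z)]) : IsStarProjection (φ (lineProjC0 z)) := by
  have hnonneg {w : ℂ} (hw : ‖w‖ = 1) : 0 ≤ φ (lineProjC0 w) := by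
    simpa using (hφ 0 _).2 (isStarProjection_lineProj hw).nonneg
  refine (isExtremeRay_map_lineProjC0 φ hφ hz).isStarProjection (hnonneg hz) ?_ ?_ hli
  · rw [← sub_nonneg, one_sub_map_lineProjC0 φ hφ1]
    exact hnonneg (by simpa)
  · rw [one_sub_map_lineProjC0 φ hφ1]
    exact isExtremeRay_map_lineProjC0 φ hφ (by simpa)

/-- The operator system `C₀` of `2×2` complex matrices with equal
diagonal entries (with positivity inherited from `M₂(ℂ)`) is not order isomorphic to any
unital C*-algebra: for every unital complex C*-algebra `B` there is no complex-linear
bijection `φ : C₀ → B` with `φ(I) = 1` mapping positive elements onto positive elements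
in both directions (where positivity in `B` means being of the form `b*b`). -/
theorem stmt19 (B : Type*) [NormedRing B] [StarRing B] [CStarRing B] [NormedAlgebra ℂ B]
    [CompleteSpace B] [StarModule ℂ B] :
    ¬ ∃ φ : C0 ≃ₗ[ℂ] B,
        φ ⟨1, one_mem_C0⟩ = 1 ∧
        (∀ x : C0, (x : Matrix (Fin 2) (Fin 2) ℂ).PosSemidef → ∃ c : B, φ x = star c * c) ∧
        (∀ x : C0, (∃ c : B, φ x = star c * c) → (x : Matrix (Fin 2) (Fin 2) ℂ).PosSemidef) := by
  rintro ⟨φ, hφ1, hpos, hpos'⟩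
  -- the spectral order: its nonnegative elements are exactly the `star c * c`
  let _ : CStarAlgebra B := {}
  let _ := CStarAlgebra.spectralOrder B
  let _ := CStarAlgebra.spectralOrderedRing B
  have hφ : ∀ x y, φ x ≤ φ y ↔ x ≤ y := fun x y => by
    rw [← sub_nonneg, ← map_sub, CStarAlgebra.nonneg_iff_eq_star_mul_self, ← Subtype.coe_le_coe,
      le_iff, ← Submodule.coe_sub]
    exact ⟨hpos' _, hpos _⟩
  have hli := linearIndependent_map_lineProjC0 φ hφ1
  have hp := isStarProjection_map_lineProjC0 φ hφ1 hφ (by simp) hli.pair_of_triple.1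
  have hr := isStarProjection_map_lineProjC0 φ hφ1 hφ (by simp) hli.pair_of_triple.2
  have hcomm := hp.commute_of_mul_mem_span hr (span_map_lineProjC0 φ hφ1 ▸ Submodule.mem_top)
  refine hp.not_linearIndependent_of_commute hr hcomm (isExtremeRay_map_lineProjC0 φ hφ (by simp))
    (isExtremeRay_map_lineProjC0 φ hφ (by simp)) ?_ hli
  rw [one_sub_map_lineProjC0 φ hφ1]
  exact isExtremeRay_map_lineProjC0 φ hφ (by simp)
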